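/- The sum A + B = {a + b : a ∈ A, b ∈ B} of two ρ-statistically downward compact subsets of ℝ is ρ-statistically downward compact. -/

import Mathlib

open Filter Pointwise

/-- Number of indices `k ≤ n` with `α (k+1) - α k ≥ ε`. -/
noncomputable def dCount (α : ℕ → ℝ) (ε : ℝ) (n : ℕ) : ℕ :=
  ((Finset.range (n + 1)).filter (fun k => ε ≤ α (k + 1) - α k)).card

/-- Number of indices `k ≤ n` with `|α (k+1) - α k| ≥ ε`. -/
noncomputable def aCount (α : ℕ → ℝ) (ε : ℝ) (n : ℕ) : ℕ :=
  ((Finset.range (n + 1)).filter (fun k => ε ≤ |α (k + 1) - α k|)).card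

/-- Number of indices `k ≤ n` with `|α k - L| ≥ ε`. -/
noncomputable def cCount (α : ℕ → ℝ) (L ε : ℝ) (n : ℕ) : ℕ :=
  ((Finset.range (n + 1)).filter (fun k => ε ≤ |α k - L|)).card

/-- `α` is ρ-statistically downward quasi-Cauchy. -/
def RDQC (ρ α : ℕ → ℝ) : Prop :=
  ∀ ε : ℝ, 0 < ε → Tendsto (fun n => (dCount α ε n : ℝ) / ρ n) atTop (nhds 0)

/-- `α` is ρ-statistically quasi-Cauchy (with absolute value). -/
def RQC (ρ α : ℕ → ℝ) : Prop :=
  ∀ ε : ℝ, 0 < ε → Tendsto (fun n => (aCount α ε n : ℝ) / ρ n) atTop (nhds 0)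

/-- `α` is ρ-statistically convergent to `L`. -/
def RStatConv (ρ α : ℕ → ℝ) (L : ℝ) : Prop :=
  ∀ ε : ℝ, 0 < ε → Tendsto (fun n => (cCount α L ε n : ℝ) / ρ n) atTop (nhds 0)

/-- `E` is ρ-statistically downward compact. -/
def DCompact (ρ : ℕ → ℝ) (E : Set ℝ) : Prop :=
  ∀ α : ℕ → ℝ, (∀ k, α k ∈ E) → ∃ φ : ℕ → ℕ, StrictMono φ ∧ RDQC ρ (α ∘ φ)

/-- `f` is ρ-statistically downward continuous on `E`. -/
def DownCont (ρ : ℕ → ℝ) (E : Set ℝ) (f : ℝ → ℝ) : Prop :=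
  ∀ α : ℕ → ℝ, (∀ k, α k ∈ E) → RDQC ρ α → RDQC ρ (fun k => f (α k))

/-!
A set of reals is ρ-statistically downward compact exactly when it is bounded above, and sums of
sets bounded above are bounded above. If `E` is bounded above, a monotone subsequence of any
sequence in `E` is either nonincreasing or convergent, and in both cases its upward jumps are
eventually below every `ε > 0`. If `E` is unbounded above, it contains a sequence whose terms
increase by more than `1` at every step; all its subsequences then jump by at least `1` at every
index, so their counts are `n + 1`, which is not `o(ρ n)` because `ρ n = O(n)`.
-/

theorem exists_seq_add_one_lt_of_not_bddAbove {E : Set ℝ} (hE : ¬ BddAbove E) :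
    ∃ α : ℕ → ℝ, (∀ k, α k ∈ E) ∧ ∀ k, α k + 1 < α (k + 1) := by
  choose f hfE hlt using not_bddAbove_iff.1 hE
  refine ⟨fun n => (fun x => f (x + 1))^[n] (f 0), fun n => ?_, fun n => ?_⟩
  · cases n with
    | zero => exact hfE 0
    | succ n => dsimp only; rw [Function.iterate_succ_apply']; exact hfE _
  · simp only [Function.iterate_succ_apply']
    exact hlt _

section

variable {ρ : ℕ → ℝ} (hpos : ∀ n, 0 < ρ n)
include hpos

namespace RDQC

variable (htop : Tendsto ρ atTop atTop)
include htop

theorem of_eventually_sub_lt {β : ℕ → ℝ}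
    (h : ∀ ε : ℝ, 0 < ε → ∀ᶠ k in atTop, β (k + 1) - β k < ε) : RDQC ρ β := by
  intro ε hε
  obtain ⟨N, hN⟩ := (h ε hε).exists_forall_of_atTop
  have hcount : ∀ n, dCount β ε n ≤ N := fun n => by
    refine (Finset.card_le_card fun k hk => ?_).trans_eq (Finset.card_range N)
    simp only [Finset.mem_filter, Finset.mem_range] at hk ⊢
    by_contra! hNk
    exact (hN k hNk).not_ge hk.2
  have hbound : Tendsto (fun n => (N : ℝ) / ρ n) atTop (nhds 0) :=
    tendsto_const_nhds.div_atTop htop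
  refine squeeze_zero (fun n => div_nonneg (Nat.cast_nonneg _) (hpos n).le) (fun n => ?_) hbound
  gcongr
  · exact (hpos n).le
  · exact_mod_cast hcount n

theorem of_antitone {β : ℕ → ℝ} (hβ : Antitone β) : RDQC ρ β :=
  of_eventually_sub_lt hpos htop fun _ hε =>
    Eventually.of_forall fun k => (sub_nonpos.2 (hβ k.le_succ)).trans_lt hε

theorem of_tendsto {β : ℕ → ℝ} {L : ℝ} (hβ : Tendsto β atTop (nhds L)) : RDQC ρ β := by
  have hsub : Tendsto (fun k => β (k + 1) - β k) atTop (nhds 0) := by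
    simpa using (hβ.comp (tendsto_add_atTop_nat 1)).sub hβ
  exact of_eventually_sub_lt hpos htop fun _ hε => hsub.eventually (gt_mem_nhds hε)

end RDQC

theorem not_tendsto_succ_div_zero (hratio : ∃ C : ℝ, ∀ᶠ n in atTop, ρ n / (n : ℝ) ≤ C) :
    ¬ Tendsto (fun n : ℕ => ((n : ℝ) + 1) / ρ n) atTop (nhds 0) := by
  intro h
  obtain ⟨C, hC⟩ := hratio
  have hδ : (0 : ℝ) < 1 / (|C| + 1) := by positivity
  obtain ⟨n, hρC, hsmall, hn⟩ :=
    (hC.and ((h.eventually (gt_mem_nhds hδ)).and (eventually_ge_atTop 1))).exists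
  have hn' : (0 : ℝ) < n := by exact_mod_cast hn
  rw [div_le_iff₀ hn'] at hρC
  rw [div_lt_div_iff₀ (hpos n) (by positivity)] at hsmall
  nlinarith [mul_le_mul_of_nonneg_right (le_abs_self C) hn'.le, abs_nonneg C]

theorem not_rdqc_of_le_sub (hratio : ∃ C : ℝ, ∀ᶠ n in atTop, ρ n / (n : ℝ) ≤ C)
    {β : ℕ → ℝ} {ε : ℝ} (hε : 0 < ε) (hβ : ∀ k, ε ≤ β (k + 1) - β k) : ¬ RDQC ρ β := by
  intro hq
  have hcount : ∀ n, dCount β ε n = n + 1 := fun n => by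
    rw [dCount, Finset.filter_true_of_mem fun k _ => hβ k, Finset.card_range]
  exact not_tendsto_succ_div_zero hpos hratio <| (hq ε hε).congr fun n => by
    rw [hcount n]; push_cast; rfl

theorem DCompact.bddAbove (hratio : ∃ C : ℝ, ∀ᶠ n in atTop, ρ n / (n : ℝ) ≤ C) {E : Set ℝ}
    (hE : DCompact ρ E) : BddAbove E := by
  by_contra hunb
  obtain ⟨α, hαE, hα⟩ := exists_seq_add_one_lt_of_not_bddAbove hunb
  have hαmono : Monotone α := monotone_nat_of_le_succ fun k => by linarith [hα k]
  obtain ⟨φ, hφ, hq⟩ := hE α hαE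
  refine not_rdqc_of_le_sub hpos hratio one_pos (fun k => ?_) hq
  have := hαmono (hφ k.lt_succ_self)
  simp only [Function.comp_apply]
  linarith [hα (φ k)]

theorem DCompact.of_bddAbove (htop : Tendsto ρ atTop atTop) {E : Set ℝ} (hE : BddAbove E) :
    DCompact ρ E := by
  intro α hαE
  obtain ⟨g, hmono | hanti⟩ := exists_increasing_or_nonincreasing_subseq' (· ≤ ·) α
  · have hmono : Monotone (α ∘ g) := monotone_nat_of_le_succ hmono
    have hbdd : BddAbove (Set.range (α ∘ g)) :=
      hE.mono (Set.range_subset_iff.2 fun k => hαE (g k))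
    exact ⟨g, g.strictMono, RDQC.of_tendsto hpos htop (tendsto_atTop_ciSup hmono hbdd)⟩
  · have hanti : StrictAnti (α ∘ g) :=
      strictAnti_nat_of_succ_lt fun k => lt_of_not_ge (hanti k (k + 1) k.lt_succ_self)
    exact ⟨g, g.strictMono, RDQC.of_antitone hpos htop hanti.antitone⟩

theorem dcompact_iff_bddAbove (htop : Tendsto ρ atTop atTop)
    (hratio : ∃ C : ℝ, ∀ᶠ n in atTop, ρ n / (n : ℝ) ≤ C) {E : Set ℝ} :
    DCompact ρ E ↔ BddAbove E :=
  ⟨DCompact.bddAbove hpos hratio, DCompact.of_bddAbove hpos htop⟩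

end

theorem dcompact_add_general (ρ : ℕ → ℝ) (hpos : ∀ n, 0 < ρ n)
    (htop : Tendsto ρ atTop atTop)
    (hratio : ∃ C : ℝ, ∀ᶠ n in atTop, ρ n / (n : ℝ) ≤ C) (A B : Set ℝ)
    (hA : DCompact ρ A) (hB : DCompact ρ B) : DCompact ρ (A + B) := by
  simp only [dcompact_iff_bddAbove hpos htop hratio] at hA hB ⊢
  exact hA.add hB

theorem dcompact_add (ρ : ℕ → ℝ) (hpos : ∀ n, 0 < ρ n) (hmono : Monotone ρ)
    (htop : Tendsto ρ atTop atTop)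
    (hratio : ∃ C : ℝ, ∀ᶠ n in atTop, ρ n / (n : ℝ) ≤ C)
    (hdiff : ∃ M : ℝ, ∀ n, |ρ (n + 1) - ρ n| ≤ M) (A B : Set ℝ)
    (hA : DCompact ρ A) (hB : DCompact ρ B) : DCompact ρ (A + B) :=
  dcompact_add_general ρ hpos htop hratio A B hA hB
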